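/- Let V be a finite-dimensional vector space over an algebraically closed field, ρ : G → GL(V) a group homomorphism, q a fixed nonzero scalar-valued function |·| : G → k× (a group homomorphism), and N : V → V a linear map satisfying |g|·(N ∘ ρ(g)) = ρ(g) ∘ N for all g ∈ G with |g| ≠ 1 for some g. If |g₀| is not a root of unity for some g₀ ∈ G, then N is nilpotent. -/

import Mathlib

/-!
Conjugating `N` by `ρ g₀` gives `c • N` with `c = |g₀|`, so `N` and `c • N` have the same
characteristic polynomial. Scaling by `c` multiplies the coefficient of `X ^ k` in the
characteristic polynomial by `c ^ (d - k)`, so if no positive power of `c` is `1` every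
coefficient below the leading one vanishes: the characteristic polynomial is `X ^ d`, and
`N` is nilpotent by Cayley–Hamilton.
-/

open Module Polynomial

theorem Matrix.charpoly_smul_comp_C_mul_X {n R : Type*} [Fintype n] [DecidableEq n] [CommRing R]
    (M : Matrix n n R) (c : R) :
    (c • M).charpoly.comp (C c * X) = C c ^ Fintype.card n * M.charpoly := by
  have hmap : (c • M).charmatrix.map (compRingHom (C c * X)) = C c • M.charmatrix := by
    ext i j
    by_cases hij : i = j
    · subst hij
      simp only [map_apply, charmatrix_apply_eq, smul_apply, smul_eq_mul, coe_compRingHom,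
        sub_comp, X_comp, C_comp]
      rw [C_mul, mul_sub]
    · simp [charmatrix_apply_ne _ _ _ hij, C_mul]
  change compRingHom (C c * X) (c • M).charmatrix.det = _
  rw [RingHom.map_det, RingHom.mapMatrix_apply, hmap, det_smul, charpoly]

theorem LinearMap.charpoly_smul_comp_C_mul_X {R M : Type*} [CommRing R] [StrongRankCondition R]
    [AddCommGroup M] [Module R M] [Module.Free R M] [Module.Finite R M] (f : End R M) (c : R) :
    (c • f).charpoly.comp (C c * X) = C c ^ finrank R M * f.charpoly := by
  rw [charpoly_def, charpoly_def, map_smul, Matrix.charpoly_smul_comp_C_mul_X,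
    Module.finrank_eq_card_chooseBasisIndex]

theorem Polynomial.Monic.eq_X_pow_of_comp_C_mul_X_eq {R : Type*} [CommRing R] [IsDomain R]
    {p : R[X]} (hp : p.Monic) {c : R} (hc0 : c ≠ 0) (hc : ∀ n : ℕ, 0 < n → c ^ n ≠ 1)
    (h : p.comp (C c * X) = C c ^ p.natDegree * p) :
    p = X ^ p.natDegree := by
  ext k
  rw [coeff_X_pow]
  rcases lt_trichotomy k p.natDegree with hk | rfl | hk
  · have hcoeff := congrArg (coeff · k) h
    simp only [comp_C_mul_X_coeff, ← C_pow, coeff_C_mul] at hcoeff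
    have hpow : c ^ p.natDegree = c ^ k * c ^ (p.natDegree - k) := by
      rw [← pow_add, Nat.add_sub_cancel' hk.le]
    rw [hpow, mul_comm, mul_assoc, mul_right_inj' (pow_ne_zero k hc0)] at hcoeff
    have hroot : c ^ (p.natDegree - k) ≠ 1 := hc _ (Nat.sub_pos_of_lt hk)
    rw [if_neg hk.ne]
    by_contra hne
    exact hroot ((mul_eq_right₀ hne).mp hcoeff.symm)
  · simpa using hp.coeff_natDegree
  · rw [if_neg hk.ne', coeff_eq_zero_of_natDegree_lt hk]

theorem LinearMap.isNilpotent_of_charpoly_smul_eq {R M : Type*} [CommRing R] [IsDomain R]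
    [AddCommGroup M] [Module R M] [Module.Free R M] [Module.Finite R M] {f : End R M} {c : R}
    (hc0 : c ≠ 0) (hc : ∀ n : ℕ, 0 < n → c ^ n ≠ 1) (h : (c • f).charpoly = f.charpoly) :
    IsNilpotent f := by
  rw [isNilpotent_iff_charpoly, ← f.charpoly_natDegree]
  refine f.charpoly_monic.eq_X_pow_of_comp_C_mul_X_eq hc0 hc ?_
  rw [← h, charpoly_smul_comp_C_mul_X, h, f.charpoly_natDegree]

theorem LinearMap.charpoly_eq_of_semiconjBy {R M : Type*} [CommRing R] [AddCommGroup M]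
    [Module R M] [Module.Free R M] [Module.Finite R M] {f g : End R M} (u : (End R M)ˣ)
    (h : SemiconjBy (u : End R M) f g) : g.charpoly = f.charpoly := by
  have hconj : (GeneralLinearGroup.toLinearEquiv u).conj f = g := by
    rw [(Units.eq_mul_inv_iff_mul_eq u).2 h.symm]
    rfl
  rw [← hconj, LinearEquiv.charpoly_conj]

theorem weil_deligne_N_nilpotent_general (K : Type*) [Field K]
    (V : Type*) [AddCommGroup V] [Module K V] [FiniteDimensional K V]
    (G : Type*) [Group G]
    (ρ : G →* (V →ₗ[K] V)ˣ) (χ : G →* Kˣ) (N : V →ₗ[K] V)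
    (hrel : ∀ g : G, (χ g : K) • (N ∘ₗ (ρ g : V →ₗ[K] V)) = (ρ g : V →ₗ[K] V) ∘ₗ N)
    (g₀ : G) (hg₀ : ∀ n : ℕ, 0 < n → (χ g₀ : K) ^ n ≠ 1) :
    IsNilpotent N := by
  have hconj : SemiconjBy (ρ g₀ : End K V) N ((χ g₀ : K) • N) := by
    rw [SemiconjBy, smul_mul_assoc]
    exact (hrel g₀).symm
  exact LinearMap.isNilpotent_of_charpoly_smul_eq (χ g₀).ne_zero hg₀
    (LinearMap.charpoly_eq_of_semiconjBy (ρ g₀) hconj)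

/-- Weil–Deligne nilpotency: let `V` be finite-dimensional over an algebraically
closed field `K`, `ρ : G →* GL(V)` a representation, `χ : G →* Kˣ` a character
(`|·|`), and `N : V →ₗ V` with `|g| • (N ∘ ρ(g)) = ρ(g) ∘ N` for all `g`.
If `|g₀|` is not a root of unity for some `g₀`, then `N` is nilpotent. -/
theorem weil_deligne_N_nilpotent (K : Type*) [Field K] [IsAlgClosed K]
    (V : Type*) [AddCommGroup V] [Module K V] [FiniteDimensional K V]
    (G : Type*) [Group G]
    (ρ : G →* (V →ₗ[K] V)ˣ) (χ : G →* Kˣ) (N : V →ₗ[K] V)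
    (hrel : ∀ g : G, (χ g : K) • (N ∘ₗ (ρ g : V →ₗ[K] V)) = (ρ g : V →ₗ[K] V) ∘ₗ N)
    (g₀ : G) (hg₀ : ∀ n : ℕ, 0 < n → (χ g₀ : K) ^ n ≠ 1) :
    IsNilpotent N :=
  weil_deligne_N_nilpotent_general K V G ρ χ N hrel g₀ hg₀
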